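/- arXiv:1305.7269 — 6 statements merged into one kernel-verified Lean document; each statement's English description precedes it below -/
import Mathlib

section
/- Let φ : M → N be a continuous group homomorphism of Polish Abelian groups. If the quotient group N/φ(M) is countable, then the image φ(M) is both open and closed in N, and hence N/φ(M) with the quotient topology is discrete. -/
/-!
Banach's open-mapping argument. Countably many translates `t + φ '' V` cover `N` (countable
quotient, separable `M`), so by Baire `closure (φ '' U)` is a neighbourhood of `0` for every
neighbourhood `U` of `0`. A Polish group is complete for its group uniformity: it is a dense `Gδ`
subgroup of its completion, and a comeagre subgroup of a Baire group is everything. Completeness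
turns the approximate statement into `φ '' U ∈ 𝓝 0` by successive approximation, so `φ(M)` is an
open, hence closed, subgroup and the quotient is discrete.
-/

open Filter Metric Set Topology TopologicalSpace Finset
open scoped Pointwise

theorem Topology.IsInducing.isGδ_range {X Y : Type*} [TopologicalSpace X] [MetrizableSpace X]
    [TopologicalSpace Y] [IsCompletelyPseudoMetrizableSpace Y] {f : Y → X}
    (hf : IsInducing f) : IsGδ (range f) := by
  let := metrizableSpaceMetric X
  let := upgradeIsCompletelyPseudoMetrizable Y
  -- `r y n` is a radius around `f y` whose `f`-preimage lies within `1 / (n + 1)` of `y`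
  have hr : ∀ (y : Y) (n : ℕ), ∃ ρ : ℝ, 0 < ρ ∧ ρ ≤ 1 / (n + 1) ∧
      f ⁻¹' ball (f y) ρ ⊆ ball y (1 / (n + 1)) := by
    intro y n
    have hball : ball y (1 / (n + 1)) ∈ 𝓝 y := ball_mem_nhds y Nat.one_div_pos_of_nat
    rw [hf.nhds_eq_comap, mem_comap] at hball
    obtain ⟨t, ht, hts⟩ := hball
    obtain ⟨ρ, hρ, hρt⟩ := Metric.mem_nhds_iff.1 ht
    exact ⟨min ρ (1 / (n + 1)), lt_min hρ Nat.one_div_pos_of_nat, min_le_right _ _,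
      fun z hz => hts (hρt (ball_subset_ball (min_le_left _ _) hz))⟩
  choose r hr_pos hr_le hr_pre using hr
  have hrange : range f = ⋂ n : ℕ, ⋃ y : Y, ball (f y) (r y n) := by
    refine Subset.antisymm (range_subset_iff.2 fun y => mem_iInter.2 fun n =>
      mem_iUnion.2 ⟨y, mem_ball_self (hr_pos y n)⟩) fun p hp => ?_
    choose x hx using fun n => mem_iUnion.1 (mem_iInter.1 hp n)
    have hconv : Tendsto (fun n => f (x n)) atTop (𝓝 p) := by
      refine tendsto_iff_dist_tendsto_zero.2 (squeeze_zero (fun _ => dist_nonneg)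
        (fun n => ?_) tendsto_one_div_add_atTop_nhds_zero_nat)
      exact (dist_comm (f (x n)) p ▸ (mem_ball.1 (hx n))).le.trans (hr_le _ _)
    have hnear : ∀ n, ∀ᶠ m in atTop, dist (x m) (x n) < 1 / (n + 1) := fun n =>
      (hconv.eventually (isOpen_ball.mem_nhds (hx n))).mono fun m hm => hr_pre _ _ hm
    have hcauchy : CauchySeq x := by
      refine Metric.cauchySeq_iff.2 fun ε hε => ?_
      obtain ⟨n, hn⟩ := exists_nat_one_div_lt (half_pos hε)
      obtain ⟨N, hN⟩ := eventually_atTop.1 (hnear n)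
      refine ⟨N, fun a ha b hb => ?_⟩
      calc dist (x a) (x b) ≤ dist (x a) (x n) + dist (x b) (x n) := dist_triangle_right _ _ _
        _ < ε / 2 + ε / 2 := add_lt_add ((hN a ha).trans hn) ((hN b hb).trans hn)
        _ = ε := add_halves ε
    obtain ⟨ξ, hξ⟩ := cauchySeq_tendsto_of_complete hcauchy
    exact ⟨ξ, tendsto_nhds_unique ((hf.continuous.tendsto ξ).comp hξ) hconv⟩
  rw [hrange]
  exact .iInter fun n => (isOpen_iUnion fun y => isOpen_ball).isGδ

@[to_additive]
theorem Subgroup.eq_top_of_mem_residual {G : Type*} [Group G] [TopologicalSpace G]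
    [ContinuousMul G] [BaireSpace G] (H : Subgroup G) (hH : (H : Set G) ∈ residual G) :
    H = ⊤ := by
  refine eq_top_iff.2 fun z _ => ?_
  have hshift : (z⁻¹ * ·) ⁻¹' (H : Set G) ∈ residual G := by
    rw [← (Homeomorph.mulLeft z⁻¹).residual_map_eq] at hH
    exact hH
  obtain ⟨w, hwH, hzw⟩ := (dense_of_mem_residual (inter_mem hH hshift)).nonempty
  simpa using H.mul_mem hwH (H.inv_mem hzw)

open UniformSpace in
theorem IsUniformAddGroup.completeSpace_of_isCompletelyPseudoMetrizableSpace {G : Type*}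
    [AddGroup G] [UniformSpace G] [IsUniformAddGroup G] [IsCompletelyPseudoMetrizableSpace G] :
    CompleteSpace G := by
  have : (uniformity G).IsCountablyGenerated := IsUniformAddGroup.uniformity_countably_generated
  let _ : PseudoMetricSpace G := UniformSpace.pseudoMetricSpace G
  have hrange : (Completion.toCompl (α := G)).range = ⊤ := by
    refine AddSubgroup.eq_top_of_mem_residual _ (residual_of_dense_Gδ ?_ ?_)
    · exact (Completion.isUniformInducing_coe G).isInducing.isGδ_range
    · exact Completion.denseRange_coe
  rw [completeSpace_iff_isComplete_range (Completion.isUniformInducing_coe G),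
    show range ((↑) : G → Completion G) = univ from congrArg SetLike.coe hrange]
  exact completeSpace_iff_isComplete_univ.1 inferInstance

theorem exists_antitone_basis_nhds_zero_neg_eq_add_subset {G : Type*} [AddGroup G]
    [TopologicalSpace G] [IsTopologicalAddGroup G] [(𝓝 (0 : G)).IsCountablyGenerated]
    {U : Set G} (hU : U ∈ 𝓝 0) :
    ∃ W : ℕ → Set G, (𝓝 0).HasAntitoneBasis W ∧ (∀ n, -W n = W n) ∧
      (∀ n, W (n + 1) + W (n + 1) ⊆ W n) ∧ W 0 ⊆ U := by
  obtain ⟨b, hb⟩ := (𝓝 (0 : G)).exists_antitone_basis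
  let s : ℕ → Set G := fun n => (U ∩ b n) ∩ -(U ∩ b n)
  have hs_mem : ∀ n, s n ∈ 𝓝 0 := fun n =>
    have h := inter_mem hU (hb.mem n)
    inter_mem h (neg_mem_nhds_zero G h)
  have hs : (𝓝 0).HasAntitoneBasis s := by
    refine ⟨hb.1.to_hasBasis (fun n _ => ⟨n, trivial, inter_subset_left.trans inter_subset_right⟩)
      fun n _ => hb.1.mem_iff.1 (hs_mem n), fun m n hmn => ?_⟩
    have h : U ∩ b n ⊆ U ∩ b m := inter_subset_inter_right U (hb.antitone hmn)
    exact inter_subset_inter h (neg_subset_neg.2 h)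
  have hhalf : ∀ m, ∀ᶠ n in atTop, s n + s n ⊆ s m := fun m => by
    obtain ⟨V, hV, hVs⟩ := exists_nhds_zero_half (hs_mem m)
    exact (hs.eventually_subset hV).mono fun n hn =>
      (add_subset_add hn hn).trans (add_subset_iff.2 hVs)
  obtain ⟨φ, -, hφ, hW⟩ := hs.subbasis_with_rel hhalf
  refine ⟨s ∘ φ, hW, fun n => ?_, fun n => hφ n.lt_succ_self, ?_⟩
  · exact (Set.inter_neg ..).trans (by rw [neg_neg, Set.inter_comm]; rfl)
  · exact inter_subset_left.trans inter_subset_left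

theorem Finset.sum_Ico_mem_of_add_subset {G : Type*} [AddCommMonoid G] {W : ℕ → Set G}
    (hW0 : ∀ n, (0 : G) ∈ W n) (hW : ∀ n, W (n + 1) + W (n + 1) ⊆ W n) {v : ℕ → G}
    (hv : ∀ i, v i ∈ W (i + 1)) (m k : ℕ) : ∑ i ∈ Ico m (m + k), v i ∈ W m := by
  induction k generalizing m with
  | zero => simpa using hW0 m
  | succ k ih =>
    rw [sum_eq_sum_Ico_succ_bot (by omega), show m + (k + 1) = m + 1 + k by omega]
    exact hW m (Set.add_mem_add (hv m) (ih (m + 1)))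

theorem Filter.HasAntitoneBasis.cauchySeq_of_sub_mem {G : Type*} [AddGroup G] [UniformSpace G]
    [IsUniformAddGroup G] {W : ℕ → Set G} (hW : (𝓝 0).HasAntitoneBasis W)
    (hneg : ∀ n, -W n = W n) {x : ℕ → G} (hx : ∀ m k, x (m + k) - x m ∈ W m) :
    CauchySeq x := by
  refine cauchySeq_of_controlled (fun N => {p | p.2 - p.1 ∈ W N}) (fun {T} hT => ?_) ?_
  · rw [uniformity_eq_comap_nhds_zero G, mem_comap] at hT
    obtain ⟨T', hT', hT'T⟩ := hT
    obtain ⟨N, hN⟩ := hW.mem_iff.1 hT'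
    exact ⟨N, fun p hp => hT'T (hN hp)⟩
  · intro N m n hm hn
    obtain hmn | hnm := le_total m n
    · obtain ⟨k, rfl⟩ := Nat.exists_eq_add_of_le hmn
      exact hW.antitone hm (hx m k)
    · show x n - x m ∈ W N
      rw [← hneg, Set.mem_neg, neg_sub]
      obtain ⟨k, rfl⟩ := Nat.exists_eq_add_of_le hnm
      exact hW.antitone hn (hx n k)

theorem Filter.HasAntitoneBasis.tendsto_of_mem_closure_image {X Y : Type*} [TopologicalSpace X]
    [TopologicalSpace Y] [RegularSpace Y] {f : X → Y} {x : X} (hf : ContinuousAt f x)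
    {W : ℕ → Set X} (hW : (𝓝 x).HasAntitoneBasis W) {r : ℕ → Y}
    (hr : ∀ n, r n ∈ closure (f '' W n)) : Tendsto r atTop (𝓝 (f x)) := by
  refine (closed_nhds_basis (f x)).tendsto_right_iff.2 fun Q ⟨hQ, hQc⟩ => ?_
  refine (hW.eventually_subset (hf hQ)).mono fun n hn => ?_
  exact closure_minimal (image_subset_iff.2 hn) hQc (hr n)

theorem AddMonoidHom.exists_seq_sub_map_sum_mem {M N : Type*} [AddCommMonoid M]
    [AddCommGroup N] (φ : M →+ N) {S : ℕ → Set N} {T : ℕ → Set M}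
    (h : ∀ n, ∀ z ∈ S n, ∃ m ∈ T n, z - φ m ∈ S (n + 1)) {y : N} (hy : y ∈ S 0) :
    ∃ v : ℕ → M, (∀ i, v i ∈ T i) ∧ ∀ n, y - φ (∑ i ∈ Finset.range n, v i) ∈ S n := by
  choose! next hnextT hnextS using h
  let rem : ℕ → N := fun n => Nat.rec y (fun n z => z - φ (next n z)) n
  have hrem : ∀ n, rem n ∈ S n := fun n => by
    induction n with
    | zero => exact hy
    | succ n ih => exact hnextS n _ ih
  refine ⟨fun n => next n (rem n), fun n => hnextT n _ (hrem n), fun n => ?_⟩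
  suffices y - φ (∑ i ∈ Finset.range n, next i (rem i)) = rem n from this ▸ hrem n
  induction n with
  | zero => simp [rem]
  | succ n ih => rw [sum_range_succ, map_add, ← sub_sub, ih]

theorem AddMonoidHom.image_mem_nhds_of_closure_image_mem_nhds {M N : Type*} [AddCommGroup M]
    [UniformSpace M] [IsUniformAddGroup M] [CompleteSpace M] [FirstCountableTopology M]
    [AddCommGroup N] [TopologicalSpace N] [IsTopologicalAddGroup N] [T2Space N] (φ : M →+ N)
    (hφ : Continuous φ) (h : ∀ U ∈ 𝓝 (0 : M), closure (φ '' U) ∈ 𝓝 0) {U : Set M}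
    (hU : U ∈ 𝓝 0) : φ '' U ∈ 𝓝 0 := by
  obtain ⟨U', hU', hU'c, hU'U⟩ := exists_mem_nhds_isClosed_subset hU
  obtain ⟨W, hW, hWneg, hWadd, hWU'⟩ := exists_antitone_basis_nhds_zero_neg_eq_add_subset hU'
  have hW0 : ∀ n, (0 : M) ∈ W n := fun n => mem_of_mem_nhds (hW.mem n)
  have happrox : ∀ n, ∀ z ∈ closure (φ '' W (n + 1)),
      ∃ m ∈ W (n + 1), z - φ m ∈ closure (φ '' W (n + 2)) := fun n z hz => by
    have hnhds : (z - ·) ⁻¹' closure (φ '' W (n + 2)) ∈ 𝓝 z :=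
      (continuous_sub_left z).continuousAt.preimage_mem_nhds (by
        rw [sub_self]; exact h _ (hW.mem _))
    obtain ⟨_, hzm, m, hm, rfl⟩ := mem_closure_iff_nhds.1 hz _ hnhds
    exact ⟨m, hm, hzm⟩
  refine mem_of_superset (h _ (hW.mem 1)) fun y hy => ?_
  obtain ⟨v, hvW, hrem⟩ := φ.exists_seq_sub_map_sum_mem happrox hy
  set x : ℕ → M := fun n => ∑ i ∈ Finset.range n, v i
  have hx : ∀ m k, x (m + k) - x m ∈ W m := fun m k => by
    rw [← sum_Ico_eq_sub _ (Nat.le_add_right m k)]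
    exact sum_Ico_mem_of_add_subset hW0 hWadd hvW m k
  obtain ⟨ξ, hξ⟩ := cauchySeq_tendsto_of_complete (hW.cauchySeq_of_sub_mem hWneg hx)
  have hξU : ξ ∈ U := hU'U <| hU'c.mem_of_tendsto hξ <| Eventually.of_forall fun n =>
    hWU' (by simpa [x] using hx 0 n)
  have hlim₁ : Tendsto (fun n => y - φ (x n)) atTop (𝓝 (y - φ ξ)) :=
    tendsto_const_nhds.sub ((hφ.tendsto ξ).comp hξ)
  have hlim₂ : Tendsto (fun n => y - φ (x n)) atTop (𝓝 (φ 0)) :=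
    hW.tendsto_of_mem_closure_image hφ.continuousAt fun n =>
      closure_mono (image_mono (hW.antitone n.le_succ)) (hrem n)
  rw [map_zero] at hlim₂
  exact ⟨ξ, hξU, (sub_eq_zero.1 (tendsto_nhds_unique hlim₁ hlim₂)).symm⟩

theorem AddMonoidHom.closure_image_mem_nhds_of_countable_quotient {M N : Type*} [AddGroup M]
    [TopologicalSpace M] [IsTopologicalAddGroup M] [SecondCountableTopology M] [AddGroup N]
    [TopologicalSpace N] [IsTopologicalAddGroup N] [BaireSpace N] (φ : M →+ N)
    [Countable (N ⧸ φ.range)] {U : Set M} (hU : U ∈ 𝓝 0) : closure (φ '' U) ∈ 𝓝 0 := by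
  obtain ⟨V, hV, hVU⟩ := exists_nhds_half_neg hU
  obtain ⟨s, hs_count, hs⟩ : ∃ s : Set M, s.Countable ∧ ⋃ m ∈ s, m +ᵥ V = univ :=
    TopologicalSpace.countable_cover_nhds fun _ => by simpa
  have : Countable s := hs_count.to_subtype
  have hcover : ⋃ p : (N ⧸ φ.range) × s, closure ((p.1.out + φ p.2) +ᵥ φ '' V) = univ := by
    refine eq_univ_of_forall fun y => ?_
    obtain ⟨⟨_, a, rfl⟩, hout⟩ := QuotientAddGroup.mk_out_eq_add φ.range y
    obtain ⟨m, hm, v, hv, hmv⟩ := mem_iUnion₂.1 (hs ▸ mem_univ (-a))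
    refine mem_iUnion.2 ⟨(y, ⟨m, hm⟩), subset_closure ⟨φ v, mem_image_of_mem φ hv, ?_⟩⟩
    simp only [vadd_eq_add] at hmv ⊢
    rw [hout, add_assoc, ← map_add, hmv, map_neg, add_neg_cancel_right]
  obtain ⟨p, hp⟩ := nonempty_interior_of_iUnion_of_closed (fun _ => isClosed_closure) hcover
  obtain ⟨w, hw⟩ : (interior (closure (φ '' V))).Nonempty := by
    rwa [closure_vadd, interior_vadd, vadd_set_nonempty] at hp
  have hsub : (· - w) '' interior (closure (φ '' V)) ⊆ closure (φ '' U) := by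
    rintro _ ⟨z, hz, rfl⟩
    refine map_mem_closure₂ continuous_sub (interior_subset hz) (interior_subset hw) ?_
    rintro _ ⟨a, ha, rfl⟩ _ ⟨b, hb, rfl⟩
    exact ⟨a - b, hVU a ha b hb, map_sub φ a b⟩
  refine mem_of_superset ?_ hsub
  exact ((Homeomorph.subRight w).isOpenMap _ isOpen_interior).mem_nhds ⟨w, hw, sub_self w⟩

/-- If `φ : M → N` is a continuous homomorphism of Polish Abelian groups and the quotient
`N ⧸ φ(M)` is countable, then the image of `φ` is open and closed in `N`, and the quotient
(with its quotient topology) is discrete. -/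
theorem open_closed_image_of_countable_quotient
    (M N : Type*) [AddCommGroup M] [TopologicalSpace M] [IsTopologicalAddGroup M] [PolishSpace M]
    [AddCommGroup N] [TopologicalSpace N] [IsTopologicalAddGroup N] [PolishSpace N]
    (φ : M →+ N) (hφ : Continuous φ)
    (hcount : Countable (N ⧸ φ.range)) :
    IsOpen (Set.range φ) ∧ IsClosed (Set.range φ) ∧ DiscreteTopology (N ⧸ φ.range) := by
  let _ : UniformSpace M := IsTopologicalAddGroup.rightUniformSpace M
  have : IsUniformAddGroup M := isUniformAddGroup_of_addCommGroup
  have : CompleteSpace M := IsUniformAddGroup.completeSpace_of_isCompletelyPseudoMetrizableSpace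
  have hrange : (φ.range : Set N) ∈ 𝓝 0 := by
    simpa using φ.image_mem_nhds_of_closure_image_mem_nhds hφ
      (fun _ hU => φ.closure_image_mem_nhds_of_countable_quotient hU) univ_mem
  have hopen : IsOpen (φ.range : Set N) := AddSubgroup.isOpen_of_mem_nhds _ hrange
  exact ⟨hopen, AddSubgroup.isClosed_of_isOpen _ hopen, QuotientAddGroup.discreteTopology hopen⟩
end

section
/- Let Z be a finite Abelian group, U_1, ..., U_k ≤ Z subgroups with U_1 + ... + U_k = Z, and f : Z → ℝ a function satisfying d_{u_1} ⋯ d_{u_k} f(z) = 0 for all u_i ∈ U_i and z ∈ Z. Then f = f_1 + ... + f_k for some functions f_i : Z → ℝ with each f_i invariant under translation by U_i. Explicitly, one can take f(z) = Σ_{∅ ≠ e ⊆ [k]} (-1)^{|e|-1} · Avg_{u_1 ∈ U_1, ..., u_k ∈ U_k} f(z - Σ_{i∈e} u_i), where each summand is U_e-invariant (U_e = Σ_{i∈e} U_i). -/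
/-!
Expanding the product of differences, `(-1)^k d_{u_1} ⋯ d_{u_k} f (z)` is the signed sum
`∑_e (-1)^{|e|} f (z - ∑_{i ∈ e} u_i)` over all `e ⊆ [k]`. Summing this over all
`u ∈ U_1 × ⋯ × U_k` kills the left side, and the `e = ∅` term is `|U_1 × ⋯ × U_k| f (z)`,
which gives the explicit formula. The summand of `e` is invariant under translation by `U_i`
for every `i ∈ e`, because such a translation is absorbed by reindexing `u_i ↦ u_i + v`; grouping
the nonempty `e` by their least element then writes `f` as a sum of `U_i`-invariant functions.
-/

def ddiff {Z A : Type*} [AddCommGroup Z] [AddCommGroup A] (u : Z) (g : Z → A) : Z → A :=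
  fun z => g (z - u) - g z

def ddiffList {Z A : Type*} [AddCommGroup Z] [AddCommGroup A] (l : List Z) (g : Z → A) : Z → A :=
  l.foldr ddiff g

open Finset

theorem Fin.sum_univ_finset_succ {M : Type*} [AddCommMonoid M] {n : ℕ}
    (F : Finset (Fin (n + 1)) → M) :
    ∑ e, F e = ∑ e : Finset (Fin n), F (e.image Fin.succ) +
      ∑ e : Finset (Fin n), F (insert 0 (e.image Fin.succ)) := by
  have hinj : Set.InjOn (image Fin.succ) (univ.powerset : Finset (Finset (Fin n))) :=
    (image_injective (Fin.succ_injective n)).injOn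
  rw [← powerset_univ, ← insert_compl_self 0, ← Fin.image_succ_univ,
    sum_powerset_insert (by simp), powerset_image, sum_image hinj, sum_image hinj, powerset_univ]

section Differences

variable {Z A : Type*} [AddCommGroup Z] [AddCommGroup A]

@[simp]
theorem ddiffList_cons (u : Z) (l : List Z) (g : Z → A) (z : Z) :
    ddiffList (u :: l) g z = ddiffList l g (z - u) - ddiffList l g z :=
  rfl

theorem neg_one_pow_smul_ddiffList_ofFn {k : ℕ} (u : Fin k → Z) (g : Z → A) (z : Z) :
    (-1 : ℤ) ^ k • ddiffList (List.ofFn u) g z =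
      ∑ e : Finset (Fin k), (-1 : ℤ) ^ #e • g (z - ∑ i ∈ e, u i) := by
  induction k generalizing z with
  | zero => rw [Fintype.sum_subsingleton _ ∅]; simp [ddiffList]
  | succ k ih =>
    rw [List.ofFn_succ, ddiffList_cons, smul_sub, pow_succ, mul_neg_one, neg_smul, neg_smul,
      ih, ih, Fin.sum_univ_finset_succ]
    simp only [card_image_of_injective _ (Fin.succ_injective k),
      sum_image (Fin.succ_injective k).injOn, sum_insert, card_insert_of_notMem, mem_image,
      Fin.succ_ne_zero, and_false, exists_false, not_false_eq_true, pow_succ, mul_neg_one,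
      neg_smul, sum_neg_distrib, sub_sub]
    abel

end Differences

section Periods

variable {Z α β : Type*} [AddCommGroup Z]

def periods (F : Z → α) : AddSubgroup Z where
  carrier := {v | ∀ z, F (z - v) = F z}
  zero_mem' := by simp
  add_mem' {a b} ha hb z := by rw [add_comm, ← sub_sub, ha, hb]
  neg_mem' {a} ha z := by rw [sub_neg_eq_add, ← ha (z + a), add_sub_cancel_right]

theorem periods_le_periods_comp (F : Z → α) (φ : α → β) :
    periods F ≤ periods fun z => φ (F z) :=
  fun _ hv z => congrArg φ (hv z)

theorem le_periods_sum {ι M : Type*} [AddCommMonoid M] {H : AddSubgroup Z} {s : Finset ι}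
    {T : ι → Z → M} (hT : ∀ e ∈ s, H ≤ periods (T e)) :
    H ≤ periods (∑ e ∈ s, T e) :=
  fun _ hv z => by
    simp only [Finset.sum_apply]
    exact sum_congr rfl fun e he => hT e he hv z

theorem exists_le_periods_sum_eq_sum_nonempty {ι M : Type*} [Fintype ι] [LinearOrder ι]
    [AddCommMonoid M] (U : ι → AddSubgroup Z) (T : Finset ι → Z → M)
    (hT : ∀ e, ∀ i ∈ e, U i ≤ periods (T e)) :
    ∃ g : ι → Z → M,
      (∀ i, U i ≤ periods (g i)) ∧ ∑ e with e.Nonempty, T e = ∑ i, g i := by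
  refine ⟨fun i => ∑ e with e.min = (i : WithTop ι), T e, fun i => le_periods_sum fun e he =>
    hT e i (mem_of_min (mem_filter.1 he).2), ?_⟩
  simp only [sum_filter]
  rw [sum_comm]
  refine sum_congr rfl fun e _ => ?_
  rcases e.eq_empty_or_nonempty with rfl | he
  · simp
  · simp [he, ← coe_min' he]

end Periods

/-- `|U_1 × ⋯ × U_k|` times the paper's `Avg_u f (z - ∑_{i ∈ e} u_i)`. -/
def boxSum {Z A ι : Type*} [AddCommGroup Z] [AddCommMonoid A] [Fintype ι] [DecidableEq ι]
    (U : ι → AddSubgroup Z) [∀ i, Fintype (U i)] (f : Z → A) (e : Finset ι) (z : Z) : A :=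
  ∑ u : ∀ i, U i, f (z - ∑ i ∈ e, (u i : Z))

section BoxSum

variable {Z A ι : Type*} [AddCommGroup Z] [AddCommMonoid A] [Fintype ι] [DecidableEq ι]
  (U : ι → AddSubgroup Z) [∀ i, Fintype (U i)] (f : Z → A)

theorem boxSum_empty (z : Z) : boxSum U f ∅ z = Fintype.card (∀ i, U i) • f z := by
  simp [boxSum]

theorem le_periods_boxSum {e : Finset ι} {i : ι} (hi : i ∈ e) :
    U i ≤ periods (boxSum U f e) := by
  intro v hv z
  let w : ∀ j, U j := Pi.single i ⟨v, hv⟩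
  have hw : ∑ j ∈ e, (w j : Z) = v := by
    rw [sum_eq_single_of_mem i hi fun j _ hj => by simp [w, hj]]
    simp [w]
  refine Fintype.sum_equiv (Equiv.addRight w) _ _ fun u => ?_
  simp [sum_add_distrib, hw, sub_sub, add_comm]

theorem iSup_le_periods_boxSum (e : Finset ι) : ⨆ i ∈ e, U i ≤ periods (boxSum U f e) :=
  iSup₂_le fun _ hi => le_periods_boxSum U f hi

end BoxSum

theorem sum_neg_one_pow_card_smul_boxSum_eq_zero {Z A : Type*} [AddCommGroup Z] [AddCommGroup A]
    {k : ℕ} (U : Fin k → AddSubgroup Z) [∀ i, Fintype (U i)] (f : Z → A)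
    (hf : ∀ u : Fin k → Z, (∀ i, u i ∈ U i) → ∀ z, ddiffList (List.ofFn u) f z = 0)
    (z : Z) : ∑ e : Finset (Fin k), (-1 : ℤ) ^ #e • boxSum U f e z = 0 := by
  simp only [boxSum, smul_sum]
  rw [sum_comm]
  refine sum_eq_zero fun u _ => ?_
  rw [← neg_one_pow_smul_ddiffList_ofFn, hf _ (fun i => (u i).2), smul_zero]

theorem eq_sum_nonempty_of_sum_neg_one_pow_card_smul_eq_zero {ι A : Type*} [Fintype ι]
    [DecidableEq ι] [AddCommGroup A] {S : Finset ι → A}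
    (hS : ∑ e, (-1 : ℤ) ^ #e • S e = 0) :
    S ∅ = ∑ e with e.Nonempty, (-1 : ℤ) ^ (#e - 1) • S e := by
  rw [← add_sum_erase _ _ (mem_univ ∅), card_empty, pow_zero, one_smul,
    add_eq_zero_iff_eq_neg, ← sum_neg_distrib] at hS
  rw [hS, filter_congr fun e _ => nonempty_iff_ne_empty, filter_ne']
  refine sum_congr rfl fun e he => ?_
  have hcard : #e ≠ 0 := card_ne_zero.2 (nonempty_iff_ne_empty.2 (ne_of_mem_erase he))
  rw [← neg_smul, ← mul_pow_sub_one hcard, neg_one_mul, neg_neg]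

theorem finite_real_PDE_degenerate_general
    (Z : Type*) [AddCommGroup Z]
    (k : ℕ) (U : Fin k → AddSubgroup Z) [∀ i, Fintype (U i)]
    (f : Z → ℝ)
    (hf : ∀ u : Fin k → Z, (∀ i, u i ∈ U i) → ∀ z, ddiffList (List.ofFn u) f z = 0) :
    (∃ g : Fin k → Z → ℝ,
        (∀ i, ∀ u ∈ U i, ∀ z, g i (z - u) = g i z) ∧ ∀ z, f z = ∑ i, g i z) ∧
    (∀ z, f z = ∑ e ∈ Finset.univ.filter (fun e : Finset (Fin k) => e.Nonempty),
        (-1 : ℝ) ^ (e.card - 1) *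
          ((∑ u : ∀ i, U i, f (z - ∑ i ∈ e, (u i : Z))) /
            (Fintype.card (∀ i, U i) : ℝ))) ∧
    (∀ e : Finset (Fin k), e.Nonempty → ∀ v ∈ ⨆ i ∈ e, U i, ∀ z,
        (∑ u : ∀ i, U i, f ((z - v) - ∑ i ∈ e, (u i : Z))) =
          ∑ u : ∀ i, U i, f (z - ∑ i ∈ e, (u i : Z))) := by
  set N : ℝ := (Fintype.card (∀ i, U i) : ℝ) with hN_def
  have hN : N ≠ 0 := Nat.cast_ne_zero.2 Fintype.card_ne_zero
  have hformula (z : Z) :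
      f z = ∑ e with e.Nonempty, (-1 : ℝ) ^ (#e - 1) * (boxSum U f e z / N) := by
    have h := eq_sum_nonempty_of_sum_neg_one_pow_card_smul_eq_zero
      (S := fun e => boxSum U f e z / N)
      (by simp_rw [← smul_div_assoc, ← sum_div,
        sum_neg_one_pow_card_smul_boxSum_eq_zero U f hf z, zero_div])
    rw [boxSum_empty, nsmul_eq_mul, ← hN_def, mul_div_cancel_left₀ _ hN] at h
    simpa only [zsmul_eq_mul, Int.cast_pow, Int.cast_neg, Int.cast_one] using h
  refine ⟨?_, hformula, fun e _ v hv z => iSup_le_periods_boxSum U f e hv z⟩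
  obtain ⟨g, hg, hsum⟩ := exists_le_periods_sum_eq_sum_nonempty U
    (fun e z => (-1 : ℝ) ^ (#e - 1) * (boxSum U f e z / N))
    fun e i hi => (le_periods_boxSum U f hi).trans <|
      periods_le_periods_comp _ fun s => (-1 : ℝ) ^ (#e - 1) * (s / N)
  exact ⟨g, fun i v hv z => hg i hv z,
    fun z => (hformula z).trans (by simpa only [Finset.sum_apply] using congrFun hsum z)⟩

/-- On a finite Abelian group `Z` with subgroups `U_1 + … + U_k = Z`, every real-valued solution
of the order-`k` partial difference equation is a sum of `U_i`-invariant functions; explicitly,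
`f(z) = ∑_{∅≠e} (-1)^{|e|-1} Avg_u f(z - ∑_{i∈e} u_i)`, and each summand is `U_e`-invariant. -/
theorem finite_real_PDE_degenerate
    (Z : Type*) [AddCommGroup Z] [Fintype Z]
    (k : ℕ) (U : Fin k → AddSubgroup Z) [∀ i, Fintype (U i)]
    (hU : (⨆ i, U i) = ⊤)
    (f : Z → ℝ)
    (hf : ∀ u : Fin k → Z, (∀ i, u i ∈ U i) → ∀ z, ddiffList (List.ofFn u) f z = 0) :
    (∃ g : Fin k → Z → ℝ,
        (∀ i, ∀ u ∈ U i, ∀ z, g i (z - u) = g i z) ∧ ∀ z, f z = ∑ i, g i z) ∧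
    (∀ z, f z = ∑ e ∈ Finset.univ.filter (fun e : Finset (Fin k) => e.Nonempty),
        (-1 : ℝ) ^ (e.card - 1) *
          ((∑ u : ∀ i, U i, f (z - ∑ i ∈ e, (u i : Z))) /
            (Fintype.card (∀ i, U i) : ℝ))) ∧
    (∀ e : Finset (Fin k), e.Nonempty → ∀ v ∈ ⨆ i ∈ e, U i, ∀ z,
        (∑ u : ∀ i, U i, f ((z - v) - ∑ i ∈ e, (u i : Z))) =
          ∑ u : ∀ i, U i, f (z - ∑ i ∈ e, (u i : Z))) :=
  finite_real_PDE_degenerate_general Z k U f hf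
end

section
/- Define f : ℝ × ℝ → ℤ by f(x, y) := ⌊fract(x) + fract(-y)⌋. Then, as real-valued functions, f(x, y) = fract(x) + fract(-y) - fract(x - y) for all x, y ∈ ℝ. Consequently f, viewed as a function on 𝕋² = (ℝ/ℤ)² (on which it is well defined), satisfies the partial difference equation d_{(u,0)} d_{(0,v)} d_{(w,w)} f = 0 for all u, v, w ∈ 𝕋, where d_s g(z) := g(z - s) - g(z), because it is a sum of three functions invariant respectively under the subgroups 𝕋×{0}, {0}×𝕋, and the diagonal {(w,w) : w ∈ 𝕋}. -/
/-- `f(x,y) = ⌊{x} + {-y}⌋`. -/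
noncomputable def f12 (x y : ℝ) : ℤ := ⌊Int.fract x + Int.fract (-y)⌋

/-- As real-valued functions `f12 x y = {x} + {-y} - {x-y}`; `f12` is doubly `1`-periodic, and
any function `F` on `𝕋² = (ℝ/ℤ)²` induced by it satisfies the partial difference equation
`d_{(u,0)} d_{(0,v)} d_{(w,w)} F = 0`. -/
theorem f12_props :
    (∀ x y : ℝ, (f12 x y : ℝ) = Int.fract x + Int.fract (-y) - Int.fract (x - y)) ∧
    (∀ (x y : ℝ) (m n : ℤ), f12 (x + m) (y + n) = f12 x y) ∧
    (∀ F : AddCircle (1 : ℝ) × AddCircle (1 : ℝ) → ℤ,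
      (∀ x y : ℝ, F ((x : AddCircle (1 : ℝ)), (y : AddCircle (1 : ℝ))) = f12 x y) →
      ∀ (u v w : AddCircle (1 : ℝ)) (p : AddCircle (1 : ℝ) × AddCircle (1 : ℝ)),
        ddiff (u, 0) (ddiff (0, v) (ddiff (w, w) F)) p = 0) := by
  have h1 : ∀ x y : ℝ, (f12 x y : ℝ) = Int.fract x + Int.fract (-y) - Int.fract (x - y) := by
    intro x y
    have hk : Int.fract x + Int.fract (-y)
        = Int.fract (x - y) + ((⌊x - y⌋ - ⌊x⌋ - ⌊-y⌋ : ℤ) : ℝ) := by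
      simp only [Int.fract]; push_cast; ring
    have hf : f12 x y = ⌊x - y⌋ - ⌊x⌋ - ⌊-y⌋ := by
      rw [f12, hk, Int.floor_add_intCast, Int.floor_fract, zero_add]
    rw [hf]
    simp only [Int.fract]
    push_cast
    ring
  have h2 : ∀ (x y : ℝ) (m n : ℤ), f12 (x + m) (y + n) = f12 x y := by
    intro x y m n
    have hn : -(y + (n : ℝ)) = -y + ((-n : ℤ) : ℝ) := by push_cast; ring
    rw [f12, hn, Int.fract_add_intCast, Int.fract_add_intCast, f12]
  refine ⟨h1, h2, ?_⟩
  intro F hF u v w p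
  obtain ⟨x', y'⟩ := p
  obtain ⟨a, rfl⟩ := QuotientAddGroup.mk_surjective u
  obtain ⟨b, rfl⟩ := QuotientAddGroup.mk_surjective v
  obtain ⟨c, rfl⟩ := QuotientAddGroup.mk_surjective w
  obtain ⟨x, rfl⟩ := QuotientAddGroup.mk_surjective x'
  obtain ⟨y, rfl⟩ := QuotientAddGroup.mk_surjective y'
  simp only [ddiff, Prod.mk_sub_mk, sub_zero, ← QuotientAddGroup.mk_sub]
  simp only [hF]
  refine Int.cast_injective (α := ℝ) ?_
  push_cast [h1]
  simp only [sub_sub_sub_cancel_right]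
  ring
end

section
/- Define σ : ℝ³ → ℝ/ℤ by σ(θ₁, θ₂, θ₃) := ⌊fract(θ₁) + fract(θ₂)⌋ · θ₃ (mod 1). Then for all θ₁, θ₂, θ₃, θ₄ ∈ ℝ one has the 3-cocycle identity σ(θ₁,θ₂,θ₃) - σ(θ₁,θ₂,θ₃+θ₄) + σ(θ₁,θ₂+θ₃,θ₄) - σ(θ₁+θ₂,θ₃,θ₄) + σ(θ₂,θ₃,θ₄) = 0 in ℝ/ℤ. -/
/-!
`σ` is the cup product of the carry `c(a, b) = ⌊{a} + {b}⌋` with the identity `θ ↦ θ`.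
The carry is an integer 2-cocycle, since both `c(a, b + c) + c(b, c)` and `c(a + b, c) + c(a, b)`
equal `⌊{a} + {b} + {c}⌋`; so the alternating sum collapses to
`(c(θ₂,θ₃) - c(θ₁+θ₂,θ₃) + c(θ₁,θ₂+θ₃) - c(θ₁,θ₂)) · θ₄ = 0` already in `ℝ`.
-/

/-- `σ(θ₁,θ₂,θ₃) = ⌊{θ₁} + {θ₂}⌋ · θ₃ (mod 1)`. -/
noncomputable def sigma3 (a b c : ℝ) : AddCircle (1 : ℝ) :=
  (((⌊Int.fract a + Int.fract b⌋ : ℝ) * c : ℝ) : AddCircle (1 : ℝ))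

section Carry

variable {R : Type*} [Ring R] [LinearOrder R] [IsOrderedRing R] [FloorRing R]

def fractCarry (a b : R) : ℤ := ⌊Int.fract a + Int.fract b⌋

theorem fract_add_eq_sub_fractCarry (a b : R) :
    Int.fract (a + b) = Int.fract a + Int.fract b - fractCarry a b := by
  have hshift : a + b = Int.fract a + Int.fract b + ((⌊a⌋ + ⌊b⌋ : ℤ) : R) := by
    push_cast
    conv_lhs => rw [← Int.fract_add_floor a, ← Int.fract_add_floor b]
    abel
  rw [hshift, Int.fract_add_intCast]
  rfl

theorem fractCarry_add_right_add_fractCarry (a b c : R) :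
    fractCarry a (b + c) + fractCarry b c = ⌊Int.fract a + Int.fract b + Int.fract c⌋ := by
  rw [fractCarry.eq_1 a, fract_add_eq_sub_fractCarry, ← add_sub_assoc, ← add_assoc,
    Int.floor_sub_intCast, sub_add_cancel]

theorem fractCarry_add_left_add_fractCarry (a b c : R) :
    fractCarry (a + b) c + fractCarry a b = ⌊Int.fract a + Int.fract b + Int.fract c⌋ := by
  rw [fractCarry.eq_1 (a + b), fract_add_eq_sub_fractCarry, sub_add_eq_add_sub,
    Int.floor_sub_intCast, sub_add_cancel]

theorem fractCarry_cocycle (a b c : R) :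
    fractCarry b c - fractCarry (a + b) c + fractCarry a (b + c) - fractCarry a b = 0 := by
  linarith [fractCarry_add_right_add_fractCarry a b c, fractCarry_add_left_add_fractCarry a b c]

end Carry

theorem sigma3_eq_fractCarry_mul (a b c : ℝ) :
    sigma3 a b c = ((fractCarry a b * c : ℝ) : AddCircle (1 : ℝ)) :=
  rfl

/-- The 3-cocycle identity for `σ` in `ℝ/ℤ`. -/
theorem sigma3_cocycle (θ₁ θ₂ θ₃ θ₄ : ℝ) :
    sigma3 θ₁ θ₂ θ₃ - sigma3 θ₁ θ₂ (θ₃ + θ₄) + sigma3 θ₁ (θ₂ + θ₃) θ₄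
      - sigma3 (θ₁ + θ₂) θ₃ θ₄ + sigma3 θ₂ θ₃ θ₄ = 0 := by
  have hcarry : (fractCarry θ₂ θ₃ - fractCarry (θ₁ + θ₂) θ₃ + fractCarry θ₁ (θ₂ + θ₃)
      - fractCarry θ₁ θ₂ : ℝ) = 0 := mod_cast fractCarry_cocycle θ₁ θ₂ θ₃
  have hreal : (fractCarry θ₁ θ₂ : ℝ) * θ₃ - fractCarry θ₁ θ₂ * (θ₃ + θ₄)
      + fractCarry θ₁ (θ₂ + θ₃) * θ₄ - fractCarry (θ₁ + θ₂) θ₃ * θ₄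
      + fractCarry θ₂ θ₃ * θ₄ = 0 := by
    linear_combination θ₄ * hcarry
  simp only [sigma3_eq_fractCarry_mul, ← AddCircle.coe_sub, ← AddCircle.coe_add, hreal,
    AddCircle.coe_zero]
end

section
/- Let S be a finite set, c ⊊ S a proper subset, and s ∈ S \ c. Let (M_a)_{a ⊆ c} be Abelian groups with compatible homomorphisms φ_{a,b} : M_a → M_b for a ⊆ b ⊆ c (satisfying φ_{a,a} = id and φ_{b,c'} ∘ φ_{a,b} = φ_{a,c'}). Define N_e := M_{e ∩ c} for e ⊆ S with structure maps φ^N_{a,e} := φ_{a∩c, e∩c}, and let ∂'_ℓ : ⊕_{|a|=ℓ-1} N_a → ⊕_{|e|=ℓ} N_e be the boundary maps (∂'_ℓ m)_e = Σ_{a ⊆ e, |a|=ℓ-1} sgn(e:a)·φ^N_{a,e}(m_a). Define ξ_ℓ : ⊕_{|b|=ℓ+1} N_b → ⊕_{|e|=ℓ} N_e by (ξ_ℓ n)_e = 0 if s ∈ e, and (ξ_ℓ n)_e = sgn(e∪{s} : e)·n_{e∪{s}} if s ∉ e (well-defined since (e∪{s})∩c = e∩c). Then ξ_ℓ ∘ ξ_{ℓ+1}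 = 0 and ∂'_ℓ ∘ ξ_{ℓ-1} + ξ_ℓ ∘ ∂'_{ℓ+1} = id on ⊕_{|e|=ℓ} N_e for all ℓ. In particular the complex (⊕_{|e|=ℓ} N_e, ∂'_ℓ) is split (contractible). -/
/-- `structSgn b a = sgn(b : a)` when `a ⊆ b` with `|b| = |a| + 1`: it is `(-1)^(j-1)` where
the element of `b` missing from `a` is the `j`-th smallest element of `b`. -/
def structSgn {k : ℕ} (b a : Finset (Fin k)) : ℤ :=
  (-1) ^ (∑ i ∈ b \ a, (a.filter (· < i)).card)

/-- The boundary maps of the structure complex of the aggrandized diagram `N_e := M_{e ∩ c}`: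
`(∂' m)_e = ∑_{a ⊆ e, |a| + 1 = |e|} sgn(e:a) • φ_{a∩c, e∩c}(m_a)`. -/
def aggBdry {k : ℕ} (c : Finset (Fin k)) (M : Finset (Fin k) → Type*)
    [∀ a, AddCommGroup (M a)] (φ : ∀ a b : Finset (Fin k), M a →+ M b)
    (m : ∀ b : Finset (Fin k), M (b ∩ c)) : ∀ e : Finset (Fin k), M (e ∩ c) :=
  fun e => ∑ a ∈ e.powerset.filter (fun a => a.card + 1 = e.card),
    structSgn e a • φ (a ∩ c) (e ∩ c) (m a)

/-- The contracting homotopy `ξ`: `(ξ m)_e = 0` if `s ∈ e`, and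
`(ξ m)_e = sgn(e∪{s} : e) • m_{e∪{s}}` otherwise (well defined since `(e∪{s})∩c = e∩c`, the
identification being realized by the structure map `φ`). -/
def aggXi {k : ℕ} (c : Finset (Fin k)) (s : Fin k) (M : Finset (Fin k) → Type*)
    [∀ a, AddCommGroup (M a)] (φ : ∀ a b : Finset (Fin k), M a →+ M b)
    (m : ∀ b : Finset (Fin k), M (b ∩ c)) : ∀ e : Finset (Fin k), M (e ∩ c) :=
  fun e => if s ∈ e then 0
    else structSgn (insert s e) e • φ (insert s e ∩ c) (e ∩ c) (m (insert s e))

lemma filter_insert_card {k : ℕ} (a : Finset (Fin k)) (t x : Fin k) (ht : t ∉ a) :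
    ((insert t a).filter (· < x)).card
      = (a.filter (· < x)).card + (if t < x then 1 else 0) := by
  rw [Finset.filter_insert]
  split
  · rw [Finset.card_insert_of_notMem (fun h => ht (Finset.mem_filter.mp h).1)]
  · simp

lemma sign_lemma {k : ℕ} (s : Fin k) (e a : Finset (Fin k)) (hs : s ∉ e) (hae : a ⊆ e)
    (hcard : a.card + 1 = e.card) :
    structSgn e a * structSgn (insert s a) a
      + structSgn (insert s e) e * structSgn (insert s e) (insert s a) = 0 := by
  have hsa : s ∉ a := fun h => hs (hae h)
  have h1 : (e \ a).card = 1 := by rw [Finset.card_sdiff_of_subset hae]; omega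
  obtain ⟨t, ht⟩ := Finset.card_eq_one.mp h1
  have htmem : t ∈ e \ a := ht ▸ Finset.mem_singleton_self t
  have hte : t ∈ e := (Finset.mem_sdiff.mp htmem).1
  have hta : t ∉ a := (Finset.mem_sdiff.mp htmem).2
  have hst : s ≠ t := fun h => hs (h ▸ hte)
  have hea : e = insert t a := by
    apply (Finset.eq_of_subset_of_card_le (Finset.insert_subset hte hae) _).symm
    rw [Finset.card_insert_of_notMem hta]; omega
  have hd2 : insert s a \ a = {s} := Finset.insert_sdiff_cancel hsa
  have hd3 : insert s e \ e = {s} := Finset.insert_sdiff_cancel hs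
  have hd4 : insert s e \ insert s a = {t} := by
    ext x
    simp only [Finset.mem_sdiff, Finset.mem_insert, Finset.mem_singleton, not_or]
    constructor
    · rintro ⟨hx1, hx2, hx3⟩
      have : x ∈ e \ a := Finset.mem_sdiff.mpr ⟨hx1.resolve_left hx2, hx3⟩
      rw [ht] at this; exact Finset.mem_singleton.mp this
    · rintro rfl
      exact ⟨Or.inr hte, fun h => hst h.symm, hta⟩
  unfold structSgn
  rw [ht, hd2, hd3, hd4, Finset.sum_singleton, Finset.sum_singleton,
    Finset.sum_singleton, Finset.sum_singleton, ← pow_add, ← pow_add]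
  rw [filter_insert_card a s t hsa]
  rw [hea, filter_insert_card a t s hta]
  rcases lt_or_gt_of_ne hst with h | h
  · rw [if_pos h, if_neg (asymm h)]
    have : (a.filter (· < s)).card + 0 + ((a.filter (· < t)).card + 1)
        = ((a.filter (· < t)).card + (a.filter (· < s)).card) + 1 := by omega
    rw [this, pow_succ]; ring
  · rw [if_neg (asymm h), if_pos h]
    have : (a.filter (· < s)).card + 1 + ((a.filter (· < t)).card + 0)
        = ((a.filter (· < t)).card + (a.filter (· < s)).card) + 1 := by omega
    rw [this, pow_succ]; ring

/-- The Homotopical Lemma: for `s ∈ S \ c`, the maps `ξ` satisfy `ξ ∘ ξ = 0` and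
`∂' ∘ ξ + ξ ∘ ∂' = id`, so the structure complex of the aggrandized diagram is split. -/
theorem homotopical_lemma {k : ℕ} (c : Finset (Fin k)) (hc : c ⊂ Finset.univ)
    (s : Fin k) (hs : s ∉ c)
    (M : Finset (Fin k) → Type*) [∀ a, AddCommGroup (M a)]
    (φ : ∀ a b : Finset (Fin k), M a →+ M b)
    (hid : ∀ a, φ a a = AddMonoidHom.id _)
    (hcomp : ∀ a b d : Finset (Fin k), a ⊆ b → b ⊆ d → d ⊆ c →
      (φ b d).comp (φ a b) = φ a d) :
    (∀ (m : ∀ b : Finset (Fin k), M (b ∩ c)) (e : Finset (Fin k)),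
        aggXi c s M φ (aggXi c s M φ m) e = 0) ∧
    (∀ (m : ∀ b : Finset (Fin k), M (b ∩ c)) (e : Finset (Fin k)),
        aggBdry c M φ (aggXi c s M φ m) e + aggXi c s M φ (aggBdry c M φ m) e = m e) := by
  have hins : ∀ e : Finset (Fin k), insert s e ∩ c = e ∩ c :=
    fun e => Finset.insert_inter_of_notMem hs
  constructor
  · intro m e
    simp [aggXi]
  · intro m e
    by_cases hse : s ∈ e
    · -- case s ∈ e
      have hB : aggXi c s M φ (aggBdry c M φ m) e = 0 := by simp [aggXi, hse]
      rw [hB, add_zero]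
      unfold aggBdry
      rw [Finset.sum_eq_single (e.erase s)]
      · have hse' : s ∉ e.erase s := Finset.notMem_erase s e
        have hins' : insert s (e.erase s) = e := Finset.insert_erase hse
        have hic : e.erase s ∩ c = e ∩ c := by
          conv_rhs => rw [← hins', hins]
        unfold aggXi
        rw [if_neg hse', hins', hic]
        simp only [hid, AddMonoidHom.id_apply]
        rw [smul_smul]
        have : structSgn e (e.erase s) * structSgn e (e.erase s) = 1 := by
          unfold structSgn; rw [← pow_add]; exact Even.neg_one_pow ⟨_, rfl⟩
        rw [this, one_smul]
      · intro b hb hbne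
        simp only [Finset.mem_filter, Finset.mem_powerset] at hb
        have hsb : s ∈ b := by
          by_contra hsb
          apply hbne
          apply Finset.eq_of_subset_of_card_le (Finset.subset_erase.mpr ⟨hb.1, hsb⟩)
          rw [Finset.card_erase_of_mem hse]; omega
        simp [aggXi, hsb]
      · intro h
        exfalso; apply h
        simp only [Finset.mem_filter, Finset.mem_powerset]
        exact ⟨Finset.erase_subset s e, Finset.card_erase_add_one hse⟩
    · -- case s ∉ e
      set A := e.powerset.filter (fun a => a.card + 1 = e.card) with hA
      have h1 : aggBdry c M φ (aggXi c s M φ m) e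
          = ∑ a ∈ A, (structSgn e a * structSgn (insert s a) a) •
              φ (insert s a ∩ c) (e ∩ c) (m (insert s a)) := by
        unfold aggBdry
        refine Finset.sum_congr rfl (fun a ha => ?_)
        simp only [hA, Finset.mem_filter, Finset.mem_powerset] at ha
        have hsa : s ∉ a := fun h => hse (ha.1 h)
        unfold aggXi
        rw [if_neg hsa, map_zsmul, smul_smul, ← AddMonoidHom.comp_apply,
          hcomp _ _ _ (le_of_eq (hins a)) (Finset.inter_subset_inter ha.1 (subset_refl c))
            Finset.inter_subset_right]
      have hT : (insert s e).powerset.filter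
            (fun b => b.card + 1 = (insert s e).card)
          = insert e (A.image (insert s)) := by
        ext b
        simp only [Finset.mem_filter, Finset.mem_powerset, Finset.mem_insert,
          Finset.mem_image, Finset.card_insert_of_notMem hse, hA]
        constructor
        · rintro ⟨hb1, hb2⟩
          by_cases hsb : s ∈ b
          · right
            refine ⟨b.erase s, ⟨?_, ?_⟩, Finset.insert_erase hsb⟩
            · intro x hx
              have hx' := Finset.mem_erase.mp hx
              exact (Finset.mem_insert.mp (hb1 hx'.2)).resolve_left hx'.1
            · rw [Finset.card_erase_add_one hsb]; omega
          · left
            apply Finset.eq_of_subset_of_card_le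
            · intro x hx
              exact (Finset.mem_insert.mp (hb1 hx)).resolve_left (fun h => hsb (h ▸ hx))
            · omega
        · rintro (rfl | ⟨a, ha, rfl⟩)
          · exact ⟨Finset.subset_insert s b, rfl⟩
          · have hsa : s ∉ a := fun h => hse (ha.1 h)
            exact ⟨Finset.insert_subset_insert s ha.1,
              by rw [Finset.card_insert_of_notMem hsa]; omega⟩
      have hnot : e ∉ A.image (insert s) := by
        simp only [Finset.mem_image]
        rintro ⟨a, ha, hae⟩
        exact hse (hae ▸ Finset.mem_insert_self s a)
      have hinj : ∀ a ∈ A, ∀ b ∈ A, insert s a = insert s b → a = b := by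
        intro a ha b hb hab
        have hsa : s ∉ a := fun h => hse ((Finset.mem_powerset.mp
          (Finset.mem_filter.mp (hA ▸ ha)).1) h)
        have hsb : s ∉ b := fun h => hse ((Finset.mem_powerset.mp
          (Finset.mem_filter.mp (hA ▸ hb)).1) h)
        rw [← Finset.erase_insert hsa, ← Finset.erase_insert hsb, hab]
      have h2 : aggXi c s M φ (aggBdry c M φ m) e
          = m e + ∑ a ∈ A, (structSgn (insert s e) e * structSgn (insert s e) (insert s a)) •
              φ (insert s a ∩ c) (e ∩ c) (m (insert s a)) := by
        unfold aggXi aggBdry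
        rw [if_neg hse, map_sum, Finset.smul_sum]
        have step : ∀ b ∈ (insert s e).powerset.filter
              (fun b => b.card + 1 = (insert s e).card),
            structSgn (insert s e) e • φ (insert s e ∩ c) (e ∩ c)
                (structSgn (insert s e) b • φ (b ∩ c) (insert s e ∩ c) (m b))
              = (structSgn (insert s e) e * structSgn (insert s e) b) •
                  φ (b ∩ c) (e ∩ c) (m b) := by
          intro b hb
          simp only [Finset.mem_filter, Finset.mem_powerset] at hb
          rw [map_zsmul, smul_smul, ← AddMonoidHom.comp_apply,
            hcomp _ _ _ (Finset.inter_subset_inter hb.1 (subset_refl c))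
              (le_of_eq (hins e)) Finset.inter_subset_right]
        rw [Finset.sum_congr rfl step, hT, Finset.sum_insert hnot, Finset.sum_image hinj]
        congr 1
        have hone : structSgn (insert s e) e * structSgn (insert s e) e = 1 := by
          unfold structSgn; rw [← pow_add]; exact Even.neg_one_pow ⟨_, rfl⟩
        rw [hone, one_smul, hid]
        rfl
      rw [h1, h2]
      have hz : (∑ a ∈ A, (structSgn e a * structSgn (insert s a) a) •
              φ (insert s a ∩ c) (e ∩ c) (m (insert s a)))
          + (∑ a ∈ A, (structSgn (insert s e) e * structSgn (insert s e) (insert s a)) •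
              φ (insert s a ∩ c) (e ∩ c) (m (insert s a))) = 0 := by
        rw [← Finset.sum_add_distrib]
        refine Finset.sum_eq_zero (fun a ha => ?_)
        simp only [hA, Finset.mem_filter, Finset.mem_powerset] at ha
        rw [← add_smul, sign_lemma s e a hse ha.1 ha.2, zero_smul]
      rw [add_left_comm, hz, add_zero]
end

section
/- Define f : ℝ × (ℤ/2ℤ) → ℝ/ℤ by f(t, 0) := (1/2)·fract(t) (mod 1) and f(t, 1) := -(1/2)·fract(t) (mod 1). Then for all t ∈ ℝ and n ∈ ℤ/2ℤ, f(t, n+1) - f(t, n) = (-1)^{n-1}·t (mod 1); consequently, for all u, v ∈ ℝ and all t, n, the triple difference d_{(u,0)} d_{(v,0)} d_{(0,1)} f (t,n) = 0 in ℝ/ℤ, where d_{(a,m)} g(t,n) := g(t-a, n-m) - g(t,n). -/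
/-- `f(t, 0) = {t}/2 (mod 1)` and `f(t, 1) = -{t}/2 (mod 1)`. -/
noncomputable def halfChar (t : ℝ) (n : ZMod 2) : AddCircle (1 : ℝ) :=
  if n = 0 then ((Int.fract t / 2 : ℝ) : AddCircle (1 : ℝ))
  else ((-(Int.fract t) / 2 : ℝ) : AddCircle (1 : ℝ))

lemma coe_sub' (a b : ℝ) : ((a - b : ℝ) : AddCircle (1:ℝ)) = (a : AddCircle (1:ℝ)) - (b : AddCircle (1:ℝ)) := rfl

lemma fract_coe (t : ℝ) : ((Int.fract t : ℝ) : AddCircle (1:ℝ)) = (t : AddCircle (1:ℝ)) := by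
  rw [eq_comm, ← sub_eq_zero, ← coe_sub', AddCircle.coe_eq_zero_iff]
  refine ⟨⌊t⌋, ?_⟩
  rw [Int.fract, zsmul_eq_mul, mul_one]
  ring

lemma part1 : ∀ (t : ℝ) (n : ZMod 2),
    halfChar t (n + 1) - halfChar t n =
      if n = 0 then -((t : ℝ) : AddCircle (1 : ℝ)) else ((t : ℝ) : AddCircle (1 : ℝ)) := by
  intro t n
  rcases (by decide : ∀ m : ZMod 2, m = 0 ∨ m = 1) n with rfl | rfl
  · have h : ((0:ZMod 2) + 1) = 1 := rfl
    simp only [halfChar, h, if_pos rfl, if_neg (by decide : (1:ZMod 2) ≠ 0), eq_self_iff_true, if_true]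
    rw [← coe_sub', show -Int.fract t / 2 - Int.fract t / 2 = -Int.fract t by ring,
      show ((-Int.fract t : ℝ) : AddCircle (1:ℝ)) = -((Int.fract t : ℝ) : AddCircle (1:ℝ)) from rfl,
      fract_coe t]
  · have h : ((1:ZMod 2) + 1) = 0 := rfl
    simp only [halfChar, h, if_pos rfl, if_neg (by decide : (1:ZMod 2) ≠ 0), eq_self_iff_true, if_true]
    rw [← coe_sub', show Int.fract t / 2 - -Int.fract t / 2 = Int.fract t by ring, fract_coe t]

lemma part2 : ∀ (u v : ℝ) (p : ℝ × ZMod 2),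
    ddiff ((u, 0) : ℝ × ZMod 2)
      (ddiff ((v, 0) : ℝ × ZMod 2)
        (ddiff ((0, 1) : ℝ × ZMod 2) (fun q : ℝ × ZMod 2 => halfChar q.1 q.2))) p = 0 := by
  intro u v ⟨t, n⟩
  have hg : ∀ (s : ℝ) (m : ZMod 2), halfChar s (m - 1) - halfChar s m =
      if m = 0 then -((s : ℝ) : AddCircle (1 : ℝ)) else ((s : ℝ) : AddCircle (1 : ℝ)) := by
    intro s m
    rw [(by decide : ∀ m : ZMod 2, m - 1 = m + 1) m]
    exact part1 s m
  simp only [ddiff, Prod.mk_sub_mk, Prod.fst, Prod.snd, sub_zero]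
  rw [hg, hg, hg, hg]
  rcases (by decide : ∀ m : ZMod 2, m = 0 ∨ m = 1) n with rfl | rfl
  · simp only [if_true, coe_sub']
    abel
  · simp only [if_neg (by decide : (1:ZMod 2) ≠ 0), coe_sub']
    abel

/-- `f(t, n+1) - f(t, n) = (-1)^{n-1} t (mod 1)`; consequently
`d_{(u,0)} d_{(v,0)} d_{(0,1)} f = 0`. -/
theorem halfChar_props :
    (∀ (t : ℝ) (n : ZMod 2),
        halfChar t (n + 1) - halfChar t n =
          if n = 0 then -((t : ℝ) : AddCircle (1 : ℝ)) else ((t : ℝ) : AddCircle (1 : ℝ))) ∧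
    (∀ (u v : ℝ) (p : ℝ × ZMod 2),
        ddiff ((u, 0) : ℝ × ZMod 2)
          (ddiff ((v, 0) : ℝ × ZMod 2)
            (ddiff ((0, 1) : ℝ × ZMod 2) (fun q : ℝ × ZMod 2 => halfChar q.1 q.2))) p = 0) := by
  exact ⟨part1, part2⟩
end
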